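/- arXiv:1812.08109 — 4 statements merged into one kernel-verified Lean document; each statement's English description precedes it below -/
import Mathlib

section
/- If f: V × W → ℝ is partially κ-strongly convex with respect to its first argument (where V ⊆ ℝⁿ and W ⊆ ℝ are nonempty convex sets), i.e. f(λ(x₁,y₁)+(1-λ)(x₂,y₂)) ≤ λf(x₁,y₁)+(1-λ)f(x₂,y₂) - (κ/2)λ(1-λ)‖x₁-x₂‖² for all (xᵢ,yᵢ) ∈ V×W and λ ∈ (0,1), and g: V → W is any map, then the function x ↦ min over η ∈ W of (η + (1/α) f(x,η)) is (κ/α)-strongly convex on V whenever the minimum is attained at η = g(x) for each x ∈ V and α > 0. -/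
open Set

/-!
Evaluate the objective at the convex combination `t • g x₁ + (1 - t) • g x₂` of the two
minimisers: it lies in `W`, so it bounds the minimum at `t • x₁ + (1 - t) • x₂` from above,
and partial strong convexity bounds it by the convex combination of the two minima minus the
quadratic term in `x₁ - x₂`. Adding the affine term `η` and scaling by `1 / α` only rescales
the modulus.
-/

section PartialStrongConvexity

variable {E F : Type*} [NormedAddCommGroup E] [NormedSpace ℝ E] [AddCommGroup F] [Module ℝ F]

def PartialStrongConvexOn (V : Set E) (W : Set F) (m : ℝ) (Φ : E → F → ℝ) : Prop :=
  ∀ x₁ ∈ V, ∀ x₂ ∈ V, ∀ y₁ ∈ W, ∀ y₂ ∈ W, ∀ t ∈ Ioo (0:ℝ) 1,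
    Φ (t • x₁ + (1 - t) • x₂) (t • y₁ + (1 - t) • y₂)
      ≤ t * Φ x₁ y₁ + (1 - t) * Φ x₂ y₂ - m / 2 * t * (1 - t) * ‖x₁ - x₂‖ ^ 2

theorem PartialStrongConvexOn.strongConvexOn_of_isMinOn {V : Set E} {W : Set F} {m : ℝ}
    {Φ : E → F → ℝ} {g : E → F} (hΦ : PartialStrongConvexOn V W m Φ)
    (hV : Convex ℝ V) (hW : Convex ℝ W) (hgW : MapsTo g V W)
    (hmin : ∀ x ∈ V, IsMinOn (Φ x) W (g x)) :
    StrongConvexOn V m (fun x => Φ x (g x)) := by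
  refine ⟨hV, fun x₁ hx₁ x₂ hx₂ a b ha hb hab => ?_⟩
  obtain rfl : b = 1 - a := by linarith
  rcases ha.eq_or_lt with rfl | ha
  · simp
  rcases hb.eq_or_lt with hb | hb
  · obtain rfl : a = 1 := by linarith
    simp
  have hmem : a • g x₁ + (1 - a) • g x₂ ∈ W := hW (hgW hx₁) (hgW hx₂) ha.le hb.le (by ring)
  calc Φ (a • x₁ + (1 - a) • x₂) (g (a • x₁ + (1 - a) • x₂))
      ≤ Φ (a • x₁ + (1 - a) • x₂) (a • g x₁ + (1 - a) • g x₂) :=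
        isMinOn_iff.1 (hmin _ (hV hx₁ hx₂ ha.le hb.le (by ring))) _ hmem
    _ ≤ a * Φ x₁ (g x₁) + (1 - a) * Φ x₂ (g x₂) - m / 2 * a * (1 - a) * ‖x₁ - x₂‖ ^ 2 :=
        hΦ x₁ hx₁ x₂ hx₂ _ (hgW hx₁) _ (hgW hx₂) a ⟨ha, by linarith⟩
    _ = _ := by simp only [smul_eq_mul]; ring

theorem PartialStrongConvexOn.id_add_const_mul {V : Set E} {W : Set ℝ} {κ c : ℝ}
    {f : E → ℝ → ℝ} (hf : PartialStrongConvexOn V W κ f) (hc : 0 ≤ c) :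
    PartialStrongConvexOn V W (c * κ) (fun x η => η + c * f x η) := by
  intro x₁ hx₁ x₂ hx₂ y₁ hy₁ y₂ hy₂ t ht
  have hscaled := mul_le_mul_of_nonneg_left (hf x₁ hx₁ x₂ hx₂ y₁ hy₁ y₂ hy₂ t ht) hc
  simp only [smul_eq_mul] at hscaled ⊢
  linarith

end PartialStrongConvexity

theorem stmt_0_general (n : ℕ) (V : Set (EuclideanSpace ℝ (Fin n))) (W : Set ℝ)
    (hVconv : Convex ℝ V) (hWconv : Convex ℝ W)
    (α κ : ℝ) (hα : α ∈ Set.Ioc (0:ℝ) 1)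
    (f : EuclideanSpace ℝ (Fin n) → ℝ → ℝ) (g : EuclideanSpace ℝ (Fin n) → ℝ)
    (hgW : ∀ x ∈ V, g x ∈ W)
    (hpsc : ∀ x₁ ∈ V, ∀ x₂ ∈ V, ∀ y₁ ∈ W, ∀ y₂ ∈ W, ∀ t ∈ Set.Ioo (0:ℝ) 1,
      f (t • x₁ + (1 - t) • x₂) (t * y₁ + (1 - t) * y₂)
        ≤ t * f x₁ y₁ + (1 - t) * f x₂ y₂ - κ / 2 * t * (1 - t) * ‖x₁ - x₂‖ ^ 2)
    (hmin : ∀ x ∈ V, ∀ η ∈ W, g x + (1 / α) * f x (g x) ≤ η + (1 / α) * f x η) :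
    ∀ x₁ ∈ V, ∀ x₂ ∈ V, ∀ t ∈ Set.Ioo (0:ℝ) 1,
      g (t • x₁ + (1 - t) • x₂) + (1 / α) * f (t • x₁ + (1 - t) • x₂) (g (t • x₁ + (1 - t) • x₂))
        ≤ t * (g x₁ + (1 / α) * f x₁ (g x₁)) + (1 - t) * (g x₂ + (1 / α) * f x₂ (g x₂))
          - (κ / α) / 2 * t * (1 - t) * ‖x₁ - x₂‖ ^ 2 := by
  intro x₁ hx₁ x₂ hx₂ t ht
  have hconv : StrongConvexOn V (1 / α * κ) (fun x => g x + (1 / α) * f x (g x)) :=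
    ((show PartialStrongConvexOn V W κ f from hpsc).id_add_const_mul (one_div_pos.2 hα.1).le
      ).strongConvexOn_of_isMinOn hVconv hWconv hgW
        fun x hx => isMinOn_iff.2 (hmin x hx)
  have key := hconv.2 hx₁ hx₂ ht.1.le (sub_pos.2 ht.2).le (add_sub_cancel t 1)
  rw [one_div_mul_eq_div] at key
  simp only [smul_eq_mul] at key
  linarith

/-- partial strong convexity of `f` wrt its first argument implies
(κ/α)-strong convexity of `x ↦ min_{η ∈ W} (η + (1/α) f(x,η))`, the minimum being
attained at `η = g x`. -/
theorem stmt_0 (n : ℕ) (V : Set (EuclideanSpace ℝ (Fin n))) (W : Set ℝ)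
    (hVne : V.Nonempty) (hWne : W.Nonempty) (hVconv : Convex ℝ V) (hWconv : Convex ℝ W)
    (α κ : ℝ) (hα : α ∈ Set.Ioc (0:ℝ) 1) (hκ : 0 < κ)
    (f : EuclideanSpace ℝ (Fin n) → ℝ → ℝ) (g : EuclideanSpace ℝ (Fin n) → ℝ)
    (hgW : ∀ x ∈ V, g x ∈ W)
    (hpsc : ∀ x₁ ∈ V, ∀ x₂ ∈ V, ∀ y₁ ∈ W, ∀ y₂ ∈ W, ∀ t ∈ Set.Ioo (0:ℝ) 1,
      f (t • x₁ + (1 - t) • x₂) (t * y₁ + (1 - t) * y₂)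
        ≤ t * f x₁ y₁ + (1 - t) * f x₂ y₂ - κ / 2 * t * (1 - t) * ‖x₁ - x₂‖ ^ 2)
    (hmin : ∀ x ∈ V, ∀ η ∈ W, g x + (1 / α) * f x (g x) ≤ η + (1 / α) * f x η) :
    ∀ x₁ ∈ V, ∀ x₂ ∈ V, ∀ t ∈ Set.Ioo (0:ℝ) 1,
      g (t • x₁ + (1 - t) • x₂) + (1 / α) * f (t • x₁ + (1 - t) • x₂) (g (t • x₁ + (1 - t) • x₂))
        ≤ t * (g x₁ + (1 / α) * f x₁ (g x₁)) + (1 - t) * (g x₂ + (1 / α) * f x₂ (g x₂))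
          - (κ / α) / 2 * t * (1 - t) * ‖x₁ - x₂‖ ^ 2 :=
  stmt_0_general n V W hVconv hWconv α κ hα f g hgW hpsc hmin
end

section
/- Let φ(t) = max{0, αt} with α, ρ > 0, μ uniform on (-ρ, 1+ρ), and Q(x,η) = ∫ max{0, φ(z-x) - η} dμ(z). Then for every η with 0 < η < αρ, the function x ↦ Q(x,η) is strongly convex on (0,1) with modulus α/(1+2ρ). -/
/-!
On `(0, 1)` the kink `x + η / α` of the integrand stays inside the support `(-ρ, 1 + ρ)`
of `μ`, so `Q(·, η)` is there the exact quadratic `x ↦ α / (2 (1 + 2ρ)) · (1 + ρ - η / α - x)²`,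
whose strong convexity inequality with modulus `α / (1 + 2ρ)` holds with equality.
-/

open MeasureTheory intervalIntegral

lemma max_zero_max_zero_sub {u η : ℝ} (hη : 0 ≤ η) :
    max 0 (max 0 u - η) = max 0 (u - η) := by
  rcases le_total u 0 with hu | hu
  · simp [max_eq_left hu, max_eq_left (by linarith : u - η ≤ 0), hη]
  · rw [max_eq_right hu]

lemma integral_max_zero_sub {a b m : ℝ} (ham : a ≤ m) (hmb : m ≤ b) :
    ∫ z in a..b, max 0 (z - m) = (b - m) ^ 2 / 2 := by
  have hcont : Continuous fun z : ℝ => max 0 (z - m) := by fun_prop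
  rw [← integral_add_adjacent_intervals (hcont.intervalIntegrable a m)
    (hcont.intervalIntegrable m b)]
  have hleft : ∫ z in a..m, max 0 (z - m) = 0 := by
    refine (integral_congr fun z hz => ?_).trans integral_zero
    rw [Set.uIcc_of_le ham] at hz
    exact max_eq_left (by linarith [hz.2])
  have hright : ∫ z in m..b, max 0 (z - m) = ∫ z in m..b, (z - m) := by
    refine integral_congr fun z hz => ?_
    rw [Set.uIcc_of_le hmb] at hz
    exact max_eq_right (by linarith [hz.1])
  rw [hleft, hright, integral_comp_sub_right (fun z => z), integral_id]
  ring

lemma integral_max_zero_max_zero_mul_sub_sub_mul {α η x a b w : ℝ} (hα : 0 < α)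
    (hη : 0 ≤ η) (ha : a ≤ x + η / α) (hb : x + η / α ≤ b) :
    ∫ z in a..b, max 0 (max 0 (α * (z - x)) - η) * w
      = α * w / 2 * (b - η / α - x) ^ 2 := by
  have hintegrand : ∀ z, max 0 (max 0 (α * (z - x)) - η) * w
      = max 0 (z - (x + η / α)) * (α * w) := by
    intro z
    have hlin : α * (z - x) - η = α * (z - (x + η / α)) := by
      rw [mul_sub, mul_sub, mul_add, mul_div_cancel₀ _ hα.ne']; ring
    have hscale := mul_max_of_nonneg 0 (z - (x + η / α)) hα.le
    rw [mul_zero] at hscale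
    rw [max_zero_max_zero_sub hη, hlin, ← hscale]
    ring
  rw [integral_congr fun z _ => hintegrand z, intervalIntegral.integral_mul_const,
    integral_max_zero_sub ha hb]
  ring

lemma half_mul_sq_sub_convexCombination (k c x y t : ℝ) :
    k / 2 * (c - (t * x + (1 - t) * y)) ^ 2
      = t * (k / 2 * (c - x) ^ 2) + (1 - t) * (k / 2 * (c - y) ^ 2)
        - k / 2 * t * (1 - t) * (x - y) ^ 2 := by
  ring

theorem stmt_4_general (α ρ : ℝ) (hα : 0 < α)
    (Q : ℝ → ℝ → ℝ)
    (hQ : ∀ x η, Q x η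
      = ∫ z in (-ρ)..(1 + ρ), max 0 (max 0 (α * (z - x)) - η) * (1 / (1 + 2 * ρ)))
    (η : ℝ) (hη : 0 < η) (hηρ : η < α * ρ) :
    ∀ x ∈ Set.Ioo (0:ℝ) 1, ∀ y ∈ Set.Ioo (0:ℝ) 1, ∀ t ∈ Set.Ioo (0:ℝ) 1,
      Q (t * x + (1 - t) * y) η
        ≤ t * Q x η + (1 - t) * Q y η
          - (α / (1 + 2 * ρ)) / 2 * t * (1 - t) * (x - y) ^ 2 := by
  intro x hx y hy t ht
  have hηα_pos : 0 < η / α := div_pos hη hα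
  have hηα_lt : η / α < ρ := (div_lt_iff₀ hα).2 (by linarith)
  have hQ_quadratic : ∀ u ∈ Set.Ioo (0:ℝ) 1,
      Q u η = α / (1 + 2 * ρ) / 2 * (1 + ρ - η / α - u) ^ 2 := by
    intro u hu
    rw [hQ, integral_max_zero_max_zero_mul_sub_sub_mul hα hη.le (by linarith [hu.1])
      (by linarith [hu.2])]
    ring
  have hmid : t * x + (1 - t) * y ∈ Set.Ioo (0:ℝ) 1 := by
    simpa only [smul_eq_mul] using convex_Ioo (0:ℝ) 1 hx hy ht.1.le (by linarith [ht.2]) (by ring)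
  rw [hQ_quadratic x hx, hQ_quadratic y hy, hQ_quadratic _ hmid,
    half_mul_sq_sub_convexCombination]

/-- for `0 < η < αρ`, the expected excess `x ↦ Q(x,η)` for
`φ(t) = max{0,αt}` and `μ` uniform on `(-ρ, 1+ρ)` is strongly convex on `(0,1)`
with modulus `α/(1+2ρ)`. -/
theorem stmt_4 (α ρ : ℝ) (hα : 0 < α) (hρ : 0 < ρ)
    (Q : ℝ → ℝ → ℝ)
    (hQ : ∀ x η, Q x η
      = ∫ z in (-ρ)..(1 + ρ), max 0 (max 0 (α * (z - x)) - η) * (1 / (1 + 2 * ρ)))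
    (η : ℝ) (hη : 0 < η) (hηρ : η < α * ρ) :
    ∀ x ∈ Set.Ioo (0:ℝ) 1, ∀ y ∈ Set.Ioo (0:ℝ) 1, ∀ t ∈ Set.Ioo (0:ℝ) 1,
      Q (t * x + (1 - t) * y) η
        ≤ t * Q x η + (1 - t) * Q y η
          - (α / (1 + 2 * ρ)) / 2 * t * (1 - t) * (x - y) ^ 2 :=
  stmt_4_general α ρ hα Q hQ η hη hηρ
end

section
/- Let φ(t) = max{0,t}, μ uniform on (0,1), α ∈ (0,1), and define Q_CVaR(x) = min over η ∈ ℝ of (η + (1/α)∫₀¹ max{0, max{0,z-x}-η} dz). Then for x ∈ (0, 1-α), the minimum is attained at η* = 1 - α - x and Q_CVaR(x) = -x + (2-α)/2; in particular Q_CVaR is affine on (0, 1-α) and hence not strongly convex on any open subinterval. -/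
open MeasureTheory intervalIntegral Set

/-! For `x < 1 - α` the loss `max 0 (z - x)` exceeds the level `η* = 1 - α - x` exactly on
`z > 1 - α`, a set of mass `α`. For every `η` the integrand dominates `z - x - η` on
`[1 - α, 1]`, which bounds the objective below by `-x + (2 - α) / 2`; at `η*` the integrand is
`max 0 (z - (1 - α))`, and the bound is attained. So the CVaR function is affine on
`(0, 1 - α)`, and an affine function has no positive strong-convexity modulus. -/

theorem max_zero_sub_max_zero_sub_of_le {x c : ℝ} (hxc : x ≤ c) (z : ℝ) :
    max 0 (max 0 (z - x) - (c - x)) = max 0 (z - c) := by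
  rcases le_total x z with hz | hz
  · rw [max_eq_right (sub_nonneg.2 hz), sub_sub_sub_cancel_right]
  · rw [max_eq_left (sub_nonpos.2 hz), max_eq_left (by linarith),
      max_eq_left (by linarith)]

theorem integral_id_sub_const {a b d : ℝ} :
    ∫ z in a..b, (z - d) = ((b - d) ^ 2 - (a - d) ^ 2) / 2 := by
  rw [integral_comp_sub_right (fun z => z) d, integral_id]

theorem integral_max_zero_sub_s7 {c : ℝ} (hc0 : 0 ≤ c) (hc1 : c ≤ 1) :
    ∫ z in (0:ℝ)..1, max 0 (z - c) = (1 - c) ^ 2 / 2 := by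
  have hint : ∀ a b : ℝ, IntervalIntegrable (fun z : ℝ => max 0 (z - c)) volume a b :=
    fun _ _ => (by fun_prop : Continuous fun z : ℝ => max 0 (z - c)).intervalIntegrable _ _
  have hlow : ∫ z in (0:ℝ)..c, max 0 (z - c) = 0 := by
    rw [integral_congr (g := fun _ => (0:ℝ)), intervalIntegral.integral_zero]
    intro z hz
    rw [uIcc_of_le hc0] at hz
    exact max_eq_left (sub_nonpos.2 hz.2)
  have hhigh : ∫ z in c..1, max 0 (z - c) = ∫ z in c..1, (z - c) := by
    refine integral_congr fun z hz => ?_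
    rw [uIcc_of_le hc1] at hz
    exact max_eq_right (sub_nonneg.2 hz.1)
  rw [← integral_add_adjacent_intervals (hint 0 c) (hint c 1), hlow, hhigh, integral_id_sub_const]
  ring

theorem integral_max_zero_sub_max_zero_sub {x c : ℝ} (hxc : x ≤ c) (hc0 : 0 ≤ c) (hc1 : c ≤ 1) :
    ∫ z in (0:ℝ)..1, max 0 (max 0 (z - x) - (c - x)) = (1 - c) ^ 2 / 2 := by
  simp_rw [max_zero_sub_max_zero_sub_of_le hxc]
  exact integral_max_zero_sub_s7 hc0 hc1

theorem mul_le_integral_max_zero_max_zero_sub {α : ℝ} (hα0 : 0 ≤ α) (hα1 : α ≤ 1) (x η : ℝ) :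
    α * (1 - α / 2 - x - η) ≤ ∫ z in (0:ℝ)..1, max 0 (max 0 (z - x) - η) := by
  have hcont : Continuous fun z : ℝ => max 0 (max 0 (z - x) - η) := by fun_prop
  calc α * (1 - α / 2 - x - η) = ∫ z in (1 - α)..1, (z - (x + η)) := by
        rw [integral_id_sub_const]; ring
    _ ≤ ∫ z in (1 - α)..1, max 0 (max 0 (z - x) - η) := by
        refine integral_mono_on (by linarith)
          ((by fun_prop : Continuous fun z : ℝ => z - (x + η)).intervalIntegrable _ _)
          (hcont.intervalIntegrable _ _) fun z _ => ?_
        have := le_max_right 0 (z - x)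
        exact le_max_of_le_right (by linarith)
    _ ≤ ∫ z in (0:ℝ)..1, max 0 (max 0 (z - x) - η) :=
        integral_mono_interval (by linarith) (by linarith) le_rfl
          (Filter.Eventually.of_forall fun _ => le_max_left _ _) (hcont.intervalIntegrable _ _)

theorem not_strongConvex_of_eq_affine {f : ℝ → ℝ} {a b p q κ : ℝ} (hκ : 0 < κ) (hab : a < b)
    (hf : ∀ x ∈ Ioo a b, f x = p * x + q) :
    ¬ ∀ x ∈ Ioo a b, ∀ y ∈ Ioo a b, ∀ t ∈ Ioo (0:ℝ) 1,
        f (t * x + (1 - t) * y) ≤ t * f x + (1 - t) * f y - κ / 2 * t * (1 - t) * (x - y) ^ 2 := by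
  intro hconv
  have hx : (2 * a + b) / 3 ∈ Ioo a b := ⟨by linarith, by linarith⟩
  have hy : (a + 2 * b) / 3 ∈ Ioo a b := ⟨by linarith, by linarith⟩
  have hmid : 1 / 2 * ((2 * a + b) / 3) + (1 - 1 / 2) * ((a + 2 * b) / 3) ∈ Ioo a b :=
    ⟨by linarith, by linarith⟩
  have h := hconv _ hx _ hy (1 / 2) ⟨by norm_num, by norm_num⟩
  rw [hf _ hmid, hf _ hx, hf _ hy] at h
  nlinarith [mul_pos hκ (pow_pos (sub_pos.2 hab) 2)]

/-- for `φ(t) = max{0,t}`, `μ` uniform on `(0,1)` and `α ∈ (0,1)`, the CVaR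
minimisation is solved by `η* = 1 - α - x` with optimal value `-x + (2-α)/2` on
`(0, 1-α)`; in particular the CVaR function is affine there and not strongly convex on
any open subinterval. -/
theorem stmt_7 (α : ℝ) (hα : α ∈ Set.Ioo (0:ℝ) 1)
    (EE : ℝ → ℝ → ℝ)
    (hEE : ∀ x η, EE x η = ∫ z in (0:ℝ)..1, max 0 (max 0 (z - x) - η))
    (QC : ℝ → ℝ)
    (hQC : ∀ x, QC x = (1 - α - x) + (1 / α) * EE x (1 - α - x)) :
    (∀ x ∈ Set.Ioo (0:ℝ) (1 - α),
        (∀ η : ℝ, QC x ≤ η + (1 / α) * EE x η) ∧ QC x = -x + (2 - α) / 2)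
      ∧ ∀ κ : ℝ, 0 < κ → ∀ a b : ℝ, 0 < a → a < b → b < 1 - α →
          ¬ (∀ x ∈ Set.Ioo a b, ∀ y ∈ Set.Ioo a b, ∀ t ∈ Set.Ioo (0:ℝ) 1,
              QC (t * x + (1 - t) * y)
                ≤ t * QC x + (1 - t) * QC y - κ / 2 * t * (1 - t) * (x - y) ^ 2) := by
  obtain ⟨hα0, hα1⟩ := hα
  have hQC_eq : ∀ x ∈ Ioo (0:ℝ) (1 - α), QC x = -x + (2 - α) / 2 := fun x hx => by
    rw [hQC, hEE, integral_max_zero_sub_max_zero_sub hx.2.le (by linarith) (by linarith)]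
    field_simp
    ring
  refine ⟨fun x hx => ⟨fun η => ?_, hQC_eq x hx⟩, fun κ hκ a b ha hab hb =>
    not_strongConvex_of_eq_affine (p := -1) (q := (2 - α) / 2) hκ hab fun x hx => ?_⟩
  · have hlow : 1 / α * (α * (1 - α / 2 - x - η)) ≤ 1 / α * EE x η := by
      rw [hEE]
      gcongr
      exact mul_le_integral_max_zero_max_zero_sub hα0.le hα1.le x η
    rw [hQC_eq x hx]
    field_simp at hlow ⊢
    linarith
  · rw [hQC_eq x ⟨by linarith [hx.1], by linarith [hx.2]⟩]
    ring
end

section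
/- Let K ⊆ ℝˢ be a pointed full-dimensional polyhedral cone written as K = Kᵢ = {z : (dᵢ-dⱼ)ᵀz ≥ 0 for all j ∈ I} where {dⱼ : j ∈ I} are the distinct extreme points of a nonempty polyhedron {v : Wᵀv ≤ q}. Then there exists α > 0 such that for every u ∈ K, max_{j∈I} (dᵢ - dⱼ)ᵀu ≥ α‖u‖. -/
/-!
The function `f u = max_j ⟪dᵢ - dⱼ, u⟫` is continuous and positively homogeneous, and it is
positive on `Kᵢ ∖ {0}`: it is `≥ 0` on `Kᵢ`, and `f u = 0` would force every `⟪dᵢ - dⱼ, u⟫` to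
vanish, putting `-u` in `Kᵢ`. Hence `f` has a positive lower bound `α` on the compact set
`Kᵢ ∩ S`, `S` the unit sphere, and homogeneity turns this into `α ‖u‖ ≤ f u` on `Kᵢ`.
-/

open Finset RealInnerProductSpace

theorem exists_pos_mul_norm_le_of_pos_of_homogeneous {E : Type*} [NormedAddCommGroup E]
    [NormedSpace ℝ E] [ProperSpace E] {K : Set E} {f : E → ℝ} (hK : IsClosed K)
    (hK_smul : ∀ c : ℝ, 0 < c → ∀ u ∈ K, c • u ∈ K) (hf : Continuous f)
    (hf_smul : ∀ c : ℝ, 0 < c → ∀ u, f (c • u) = c * f u) (hf_pos : ∀ u ∈ K, u ≠ 0 → 0 < f u) :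
    ∃ α : ℝ, 0 < α ∧ ∀ u ∈ K, α * ‖u‖ ≤ f u := by
  have hS : IsCompact (K ∩ Metric.sphere 0 1) := (isCompact_sphere 0 1).inter_left hK
  obtain ⟨α, hα, hαS⟩ := hS.exists_forall_le' hf.continuousOn
    fun v hv ↦ hf_pos v hv.1 (ne_zero_of_mem_unit_sphere ⟨v, hv.2⟩)
  refine ⟨α, hα, fun u hu ↦ ?_⟩
  rcases eq_or_ne u 0 with rfl | hu0
  · have hf_zero : f 0 = 2 * f 0 := by simpa using hf_smul 2 two_pos 0
    simp only [norm_zero, mul_zero]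
    linarith
  have hnorm : 0 < ‖u‖ := norm_pos_iff.mpr hu0
  have hv : ‖u‖⁻¹ • u ∈ K ∩ Metric.sphere 0 1 := by
    refine ⟨hK_smul _ (inv_pos.mpr hnorm) u hu, ?_⟩
    simp [norm_smul, hnorm.ne']
  calc α * ‖u‖ ≤ f (‖u‖⁻¹ • u) * ‖u‖ := by gcongr; exact hαS _ hv
    _ = f u := by rw [hf_smul _ (inv_pos.mpr hnorm)]; field_simp

section PolyhedralCone

variable {E ι : Type*} [NormedAddCommGroup E] [InnerProductSpace ℝ E]

def polyhedralCone (a : ι → E) : Set E := {z | ∀ j, 0 ≤ ⟪a j, z⟫}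

theorem isClosed_polyhedralCone (a : ι → E) : IsClosed (polyhedralCone a) := by
  simp only [polyhedralCone, Set.ofPred_forall]
  exact isClosed_iInter fun j ↦ isClosed_le continuous_const (continuous_const.inner continuous_id)

theorem smul_mem_polyhedralCone {a : ι → E} {c : ℝ} (hc : 0 ≤ c) {u : E}
    (hu : u ∈ polyhedralCone a) : c • u ∈ polyhedralCone a := fun j ↦ by
  rw [real_inner_smul_right]
  exact mul_nonneg hc (hu j)

variable [Fintype ι] [Nonempty ι]

theorem sup'_inner_pos_of_pointed {a : ι → E}
    (hpointed : ∀ z ∈ polyhedralCone a, -z ∈ polyhedralCone a → z = 0)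
    {u : E} (hu : u ∈ polyhedralCone a) (hu0 : u ≠ 0) :
    0 < univ.sup' univ_nonempty fun j ↦ ⟪a j, u⟫ := by
  by_contra! hle
  rw [sup'_le_iff] at hle
  refine hu0 (hpointed u hu fun j ↦ ?_)
  simpa [inner_neg_right] using hle j (mem_univ j)

theorem exists_pos_mul_norm_le_sup'_inner [ProperSpace E] {a : ι → E}
    (hpointed : ∀ z ∈ polyhedralCone a, -z ∈ polyhedralCone a → z = 0) :
    ∃ α : ℝ, 0 < α ∧ ∀ u ∈ polyhedralCone a,
      α * ‖u‖ ≤ univ.sup' univ_nonempty fun j ↦ ⟪a j, u⟫ := by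
  refine exists_pos_mul_norm_le_of_pos_of_homogeneous (isClosed_polyhedralCone a)
    (fun c hc _ hu ↦ smul_mem_polyhedralCone hc.le hu) ?_ (fun c hc u ↦ ?_)
    fun u hu hu0 ↦ sup'_inner_pos_of_pointed hpointed hu hu0
  · exact Continuous.finset_sup'_apply univ_nonempty fun j _ ↦ continuous_const.inner continuous_id
  · simp only [real_inner_smul_right]
    exact (mul₀_sup' hc.le _ _ _).symm

end PolyhedralCone

theorem stmt_19_general (s : ℕ)
    (I : Type*) [Fintype I] [Nonempty I]
    (dv : I → EuclideanSpace ℝ (Fin s))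
    (i : I)
    (K : Set (EuclideanSpace ℝ (Fin s)))
    (hK : K = {z : EuclideanSpace ℝ (Fin s) | ∀ j : I, (0:ℝ) ≤ inner ℝ (dv i - dv j) z})
    (hpointed : ∀ z ∈ K, -z ∈ K → z = 0) :
    ∃ α : ℝ, 0 < α ∧ ∀ u ∈ K,
      α * ‖u‖ ≤ Finset.univ.sup' Finset.univ_nonempty
        (fun j => (inner ℝ (dv i - dv j) u : ℝ)) := by
  subst hK
  exact exists_pos_mul_norm_le_sup'_inner hpointed

/-- for a pointed, full-dimensional linearity cone
`Kᵢ = {z : ⟨dᵢ - dⱼ, z⟩ ≥ 0 ∀ j}` of the value function, where `{dⱼ}` are the distinct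
extreme points of the bounded nonempty polyhedron `{v : Wᵀv ≤ q}`, there is `α > 0`
with `max_j ⟨dᵢ - dⱼ, u⟩ ≥ α‖u‖` for every `u ∈ Kᵢ`. -/
theorem stmt_19 (s m : ℕ) (W : Matrix (Fin s) (Fin m) ℝ) (q : Fin m → ℝ)
    (I : Type*) [Fintype I] [Nonempty I]
    (dv : I → EuclideanSpace ℝ (Fin s))
    (P : Set (EuclideanSpace ℝ (Fin s)))
    (hP : P = {v : EuclideanSpace ℝ (Fin s) | ∀ k : Fin m, (∑ l, W l k * v l) ≤ q k})
    (hPne : P.Nonempty) (hPbdd : Bornology.IsBounded P)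
    (hext : Set.extremePoints ℝ P = Set.range dv)
    (hinj : Function.Injective dv)
    (i : I)
    (K : Set (EuclideanSpace ℝ (Fin s)))
    (hK : K = {z : EuclideanSpace ℝ (Fin s) | ∀ j : I, (0:ℝ) ≤ inner ℝ (dv i - dv j) z})
    (hpointed : ∀ z ∈ K, -z ∈ K → z = 0)
    (hfulldim : (interior K).Nonempty) :
    ∃ α : ℝ, 0 < α ∧ ∀ u ∈ K,
      α * ‖u‖ ≤ Finset.univ.sup' Finset.univ_nonempty
        (fun j => (inner ℝ (dv i - dv j) u : ℝ)) :=
  stmt_19_general s I dv i K hK hpointed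
end
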